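/- Let n ≥ 2 and 0 ≤ a < 1, and let E_a := {(x_1,…,x_n) ∈ [0,1)^n : x_n ≤ a}. Then the (n−1)-dimensional Hausdorff measure of E_a ∩ D̂_n equals W_a times the (n−1)-dimensional Hausdorff measure of D̂_n, where W_a := (1/(n−1)!) · Σ over pairs of integers (i,k) with 0 ≤ i ≤ n and max(i·a, 1) ≤ k ≤ n−1 of (−1)^i · C(n,i) · (k − i·a)^{n−1}. -/

import Mathlib

open MeasureTheory Finset

/-- The set `D̂_n`: points of `[0,1)^n` with increasingly sorted coordinates whose sum is
an integer, as a subset of Euclidean space. -/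
def Dhat (n : ℕ) : Set (EuclideanSpace ℝ (Fin n)) :=
  {x | (∀ i, 0 ≤ x i ∧ x i < 1) ∧ (∀ i j : Fin n, i ≤ j → x i ≤ x j) ∧
    ∃ m : ℤ, ∑ i, x i = (m : ℝ)}

/-- `W_a = (1/(n−1)!) · Σ_{(i,k) ∈ ℤ², 0 ≤ i ≤ n, max(i·a, 1) ≤ k ≤ n−1}
(−1)^i C(n,i) (k − i·a)^{n−1}`. -/
noncomputable def Wexp (n : ℕ) (a : ℝ) : ℝ :=
  (1 / ((n - 1).factorial : ℝ)) *
    ∑ i ∈ Finset.Icc (0 : ℤ) (n : ℤ),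
      ∑ k ∈ (Finset.Icc (1 : ℤ) ((n : ℤ) - 1)).filter (fun k : ℤ => (i : ℝ) * a ≤ (k : ℝ)),
        (-1 : ℝ) ^ i * (n.choose i.toNat : ℝ) * ((k : ℝ) - (i : ℝ) * a) ^ (n - 1)

/-!
Drop the sorting condition: let `S ⊆ [0,1)^n` be the set of points with integer coordinate sum
and `S_a` its part in `[0,a]^n`. Both are invariant under permutations of the coordinates, and
points with a repeated coordinate form a `μH[n-1]`-null set, so each has `n!` times the measure
of its sorted part (which is `D̂_n`, resp. `E_a ∩ D̂_n`).

The hyperplane `∑ x = k` is charted by its first `m = n - 1` coordinates, and `μH[m]` pulls back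
to a translation-invariant measure, i.e. to `c • volume` with `c` independent of `k`. Hence
`μH[m] S = c · vol [0,1)^m = c`, while `μH[m] S_a = c · ∑ₖ vol {y ∈ [0,a]^m : k - a ≤ ∑ y ≤ k}`.
Integrating out one coordinate at a time, the cube `[0,a]^m` cut by `∑ y ≤ t` has volume
`(1/m!) ∑ᵢ (-1)^i C(m,i) (t - i a)₊^m`; by Pascal's rule the slab volumes are the same sums with
`C(m+1,i)`, and summing over `k` gives `W_a`.
-/

open scoped Topology NNReal ENNReal Nat

lemma sum_choose_mul_sub_succ (N : ℕ) (h : ℕ → ℝ) :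
    ∑ i ∈ range (N + 1), (-1) ^ i * (N.choose i : ℝ) * (h i - h (i + 1)) =
      ∑ i ∈ range (N + 2), (-1) ^ i * ((N + 1).choose i : ℝ) * h i := by
  have hshift : ∑ i ∈ range (N + 1), (-1) ^ i * (N.choose i : ℝ) * h i =
      ∑ i ∈ range (N + 1), (-1) ^ (i + 1) * (N.choose (i + 1) : ℝ) * h (i + 1) + h 0 := by
    rw [sum_range_succ' (fun i => (-1) ^ i * (N.choose i : ℝ) * h i), sum_range_succ _ N]
    simp
  simp only [mul_sub, sum_sub_distrib]
  rw [hshift, sum_range_succ' _ (N + 1)]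
  simp only [Nat.choose_succ_succ', Nat.cast_add, pow_succ, mul_add, add_mul, sum_add_distrib]
  simp
  ring

lemma hasDerivAt_max_zero_pow {p : ℕ} (hp : p ≠ 0) (t : ℝ) :
    HasDerivAt (fun u : ℝ => max u 0 ^ (p + 1)) ((p + 1) * max t 0 ^ p) t := by
  rcases lt_trichotomy t 0 with ht | rfl | ht
  · have hloc : (fun u : ℝ => max u 0 ^ (p + 1)) =ᶠ[𝓝 t] fun _ => 0 := by
      filter_upwards [eventually_lt_nhds ht] with u hu
      simp [max_eq_right hu.le]
    simpa [max_eq_right ht.le, hp] using (hasDerivAt_const t (0 : ℝ)).congr_of_eventuallyEq hloc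
  · have hleft : HasDerivWithinAt (fun u : ℝ => max u 0 ^ (p + 1)) 0 (Set.Iic 0) 0 :=
      (hasDerivWithinAt_const (0 : ℝ) _ (0 : ℝ)).congr
        (fun u (hu : u ≤ 0) => by simp [max_eq_right hu]) (by simp)
    have hright : HasDerivWithinAt (fun u : ℝ => max u 0 ^ (p + 1)) 0 (Set.Ici 0) 0 := by
      refine ((hasDerivAt_pow (p + 1) (0 : ℝ)).hasDerivWithinAt.congr
        (fun u (hu : 0 ≤ u) => by simp [max_eq_left hu]) (by simp)).congr_deriv ?_
      simp [hp]
    simpa [hp] using (hleft.union hright).hasDerivAt (by simp [Set.Iic_union_Ici])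
  · have hloc : (fun u : ℝ => max u 0 ^ (p + 1)) =ᶠ[𝓝 t] fun u => u ^ (p + 1) := by
      filter_upwards [eventually_gt_nhds ht] with u hu
      simp [max_eq_left hu.le]
    simpa [max_eq_left ht.le] using (hasDerivAt_pow (p + 1) t).congr_of_eventuallyEq hloc

lemma integral_max_sub_zero_pow {p : ℕ} (hp : p ≠ 0) (a t : ℝ) :
    ∫ z in 0..a, max (t - z) 0 ^ p = (max t 0 ^ (p + 1) - max (t - a) 0 ^ (p + 1)) / (p + 1) := by
  rw [intervalIntegral.integral_comp_sub_left (fun u => max u 0 ^ p), sub_zero, sub_div]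
  refine intervalIntegral.integral_eq_sub_of_hasDerivAt
    (f := fun u => max u 0 ^ (p + 1) / (p + 1)) (fun u _ => ?_)
    ((by fun_prop : Continuous fun u : ℝ => max u 0 ^ p).intervalIntegrable _ _)
  have hp1 : (p : ℝ) + 1 ≠ 0 := by positivity
  simpa [mul_div_cancel_left₀ _ hp1] using (hasDerivAt_max_zero_pow hp u).div_const ((p : ℝ) + 1)

noncomputable def truncPowSum (N p : ℕ) (a t : ℝ) : ℝ :=
  ∑ i ∈ range (N + 1), (-1) ^ i * (N.choose i : ℝ) * max (t - i * a) 0 ^ p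

@[fun_prop]
lemma continuous_truncPowSum (N p : ℕ) (a : ℝ) : Continuous (truncPowSum N p a) := by
  unfold truncPowSum
  fun_prop

lemma truncPowSum_sub_shift (N p : ℕ) (a t : ℝ) :
    truncPowSum N p a t - truncPowSum N p a (t - a) = truncPowSum (N + 1) p a t := by
  rw [truncPowSum, truncPowSum, truncPowSum, ← sum_sub_distrib,
    ← sum_choose_mul_sub_succ N (fun i => max (t - i * a) 0 ^ p)]
  refine sum_congr rfl fun i _ => ?_
  push_cast
  ring_nf

lemma integral_truncPowSum {p : ℕ} (hp : p ≠ 0) (N : ℕ) (a t : ℝ) :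
    ∫ z in 0..a, truncPowSum N p a (t - z) = truncPowSum (N + 1) (p + 1) a t / (p + 1) := by
  rw [← truncPowSum_sub_shift, sub_div]
  simp only [truncPowSum, sum_div, ← sum_sub_distrib]
  rw [intervalIntegral.integral_finsetSum
    fun i _ => (by fun_prop : Continuous _).intervalIntegrable _ _]
  refine sum_congr rfl fun i _ => ?_
  simp only [intervalIntegral.integral_const_mul, sub_right_comm _ _ ((i : ℝ) * a),
    integral_max_sub_zero_pow hp]
  ring

lemma truncPowSum_one_one (a t : ℝ) : truncPowSum 1 1 a t = max t 0 - max (t - a) 0 := by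
  simp [truncPowSum, sum_range_succ]
  ring

lemma truncPowSum_self_nonneg {a : ℝ} (ha : 0 ≤ a) {m : ℕ} (hm : m ≠ 0) (t : ℝ) :
    0 ≤ truncPowSum m m a t := by
  induction m generalizing t with
  | zero => exact absurd rfl hm
  | succ m ih =>
    rcases eq_or_ne m 0 with rfl | hm
    · rw [truncPowSum_one_one, sub_nonneg]
      exact max_le_max (by linarith) le_rfl
    · rw [← div_mul_cancel₀ (truncPowSum (m + 1) (m + 1) a t) (by positivity : (m : ℝ) + 1 ≠ 0),
        ← integral_truncPowSum hm]
      exact mul_nonneg (intervalIntegral.integral_nonneg ha fun z _ => ih hm _) (by positivity)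

def cutCube (a : ℝ) (m : ℕ) (t : ℝ) : Set (Fin m → ℝ) :=
  Set.univ.pi (fun _ => Set.Icc 0 a) ∩ {y | ∑ i, y i ≤ t}

lemma measurableSet_cutCube (a : ℝ) (m : ℕ) (t : ℝ) : MeasurableSet (cutCube a m t) :=
  (MeasurableSet.univ_pi fun _ => measurableSet_Icc).inter
    (measurableSet_le (by fun_prop) measurable_const)

lemma cons_mem_cutCube {a : ℝ} {m : ℕ} {t z : ℝ} {y : Fin m → ℝ} :
    Fin.cons z y ∈ cutCube a (m + 1) t ↔ z ∈ Set.Icc 0 a ∧ y ∈ cutCube a m (t - z) := by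
  simp only [cutCube, Set.mem_inter_iff, Set.mem_univ_pi, Fin.forall_fin_succ, Fin.cons_zero,
    Fin.cons_succ, Set.mem_ofPred_eq, Fin.sum_univ_succ, le_sub_iff_add_le']
  tauto

lemma volume_cutCube_succ (a : ℝ) (m : ℕ) (t : ℝ) :
    volume (cutCube a (m + 1) t) = ∫⁻ z in Set.Icc 0 a, volume (cutCube a m (t - z)) := by
  have hmp := (volume_preserving_piFinSuccAbove (fun _ : Fin (m + 1) => ℝ) 0).symm
  have hmeas := (measurableSet_cutCube a (m + 1) t).preimage hmp.measurable
  rw [← hmp.measure_preimage (measurableSet_cutCube a (m + 1) t).nullMeasurableSet,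
    Measure.volume_eq_prod, Measure.prod_apply hmeas, ← lintegral_indicator measurableSet_Icc]
  congr 1
  ext z
  have hslice : Prod.mk z ⁻¹' ((MeasurableEquiv.piFinSuccAbove (fun _ => ℝ) 0).symm ⁻¹'
      cutCube a (m + 1) t) = {y | Fin.cons z y ∈ cutCube a (m + 1) t} := by
    simp only [MeasurableEquiv.piFinSuccAbove_symm_apply, Fin.insertNthEquiv_zero]
    rfl
  rw [hslice]
  by_cases hz : z ∈ Set.Icc 0 a <;> simp [cons_mem_cutCube, hz]

lemma volume_cutCube_one {a : ℝ} (ha : 0 ≤ a) (t : ℝ) :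
    volume (cutCube a 1 t) = ENNReal.ofReal (truncPowSum 1 1 a t) := by
  have hslice : ∀ z, volume (cutCube a 0 (t - z)) = (Set.Iic t).indicator 1 z := fun z => by
    by_cases hz : z ≤ t
    · rw [Set.indicator_of_mem (Set.mem_Iic.mpr hz), cutCube,
        Set.inter_eq_left.mpr fun y _ => by simpa using hz, volume_pi_pi]
      simp
    · rw [Set.indicator_of_notMem (mt Set.mem_Iic.mp hz)]
      simp [cutCube, hz]
  have hinter : Set.Iic t ∩ Set.Icc 0 a = Set.Icc 0 (min a t) := by
    ext z
    simp only [Set.mem_inter_iff, Set.mem_Iic, Set.mem_Icc, le_min_iff]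
    tauto
  rw [volume_cutCube_succ, setLIntegral_congr_fun measurableSet_Icc fun z _ => hslice z,
    lintegral_indicator_one measurableSet_Iic, Measure.restrict_apply measurableSet_Iic, hinter,
    Real.volume_Icc, truncPowSum_one_one]
  rcases le_total t 0 with ht | ht
  · rw [ENNReal.ofReal_of_nonpos (by simp [ht]), ENNReal.ofReal_of_nonpos
      (by simp [max_eq_right ht, max_eq_right (show t - a ≤ 0 by linarith)])]
  congr 1
  rcases le_total t a with hta | hta
  · simp [ht, hta]
  · simp [ht, hta]

lemma volume_cutCube {a : ℝ} (ha : 0 ≤ a) {m : ℕ} (hm : m ≠ 0) (t : ℝ) :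
    volume (cutCube a m t) = ENNReal.ofReal (truncPowSum m m a t / m !) := by
  induction m generalizing t with
  | zero => exact absurd rfl hm
  | succ m ih =>
    rcases eq_or_ne m 0 with rfl | hm
    · simpa using volume_cutCube_one ha t
    have hint : IntegrableOn (fun z => truncPowSum m m a (t - z) / m !) (Set.Icc 0 a) :=
      (by fun_prop : Continuous _).integrableOn_Icc
    rw [volume_cutCube_succ, setLIntegral_congr_fun measurableSet_Icc fun z _ => ih hm (t - z),
      ← ofReal_integral_eq_lintegral_ofReal hint (ae_of_all _ fun z =>
        div_nonneg (truncPowSum_self_nonneg ha hm _) (by positivity)),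
      integral_Icc_eq_integral_Ioc, ← intervalIntegral.integral_of_le ha,
      intervalIntegral.integral_div, integral_truncPowSum hm, Nat.factorial_succ]
    push_cast
    rw [div_div]

lemma monotone_truncPowSum_self {a : ℝ} (ha : 0 ≤ a) {m : ℕ} (hm : m ≠ 0) :
    Monotone (truncPowSum m m a) := fun s t hst => by
  have h := measure_mono (μ := volume) (show cutCube a m s ⊆ cutCube a m t from
    Set.inter_subset_inter_right _ fun y (hy : _ ≤ s) => hy.trans hst)
  rw [volume_cutCube ha hm, volume_cutCube ha hm, ENNReal.ofReal_le_ofReal_iff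
    (div_nonneg (truncPowSum_self_nonneg ha hm t) (by positivity))] at h
  exact (div_le_div_iff_of_pos_right (by positivity)).mp h

lemma addHaar_linearMap_fiber_eq_zero {E : Type*} [NormedAddCommGroup E] [NormedSpace ℝ E]
    [MeasurableSpace E] [BorelSpace E] [FiniteDimensional ℝ E] (μ : Measure E)
    [μ.IsAddHaarMeasure] {f : E →ₗ[ℝ] ℝ} (hf : f ≠ 0) (r : ℝ) : μ {x | f x = r} = 0 := by
  have h := (ae_comp_linearMap_mem_iff f μ volume (LinearMap.surjective_of_ne_zero hf)
    (measurableSet_singleton r).compl).mpr (by simp [ae_iff])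
  simpa [ae_iff] using h

/-- The points of `B^(m+1)` on the hyperplane `∑ x = t`, seen through their first `m`
coordinates. -/
def slab (B : Set ℝ) (m : ℕ) (t : ℝ) : Set (Fin m → ℝ) :=
  {y | (∀ i, y i ∈ B) ∧ t - ∑ i, y i ∈ B}

lemma measurableSet_slab {m : ℕ} {B : Set ℝ} (hB : MeasurableSet B) (k : ℝ) :
    MeasurableSet (slab B m k) := by
  unfold slab
  measurability

lemma volume_slab_Icc {a : ℝ} (ha : 0 ≤ a) {m : ℕ} (hm : m ≠ 0) (t : ℝ) :
    volume (slab (Set.Icc 0 a) m t) = ENNReal.ofReal (truncPowSum (m + 1) m a t / m !) := by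
  set S := slab (Set.Icc 0 a) m t
  have hunion : S ∪ cutCube a m (t - a) = cutCube a m t := by
    ext y
    simp only [S, cutCube, Set.mem_union, Set.mem_inter_iff, Set.mem_univ_pi, Set.mem_ofPred_eq,
      Set.mem_Icc]
    constructor
    · rintro (⟨hy, h0, -⟩ | ⟨hy, hs⟩) <;> exact ⟨hy, by linarith⟩
    · rintro ⟨hy, hs⟩
      by_cases hs' : ∑ i, y i ≤ t - a
      · exact Or.inr ⟨hy, hs'⟩
      · exact Or.inl ⟨hy, by linarith, by linarith⟩
  have hinter : volume (S ∩ cutCube a m (t - a)) = 0 := by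
    let sumₗ : (Fin m → ℝ) →ₗ[ℝ] ℝ := ∑ i, LinearMap.proj i
    have hsum : sumₗ ≠ 0 := fun h => by
      simpa [sumₗ, hm] using LinearMap.congr_fun h 1
    refine measure_mono_null (fun y ⟨⟨_, _, hy⟩, _, hy'⟩ => ?_)
      (addHaar_linearMap_fiber_eq_zero volume hsum (t - a))
    simp only [Set.mem_ofPred_eq, sumₗ, LinearMap.coe_sum, LinearMap.coe_proj, Finset.sum_apply,
      Function.eval]
    simp only [Set.mem_ofPred_eq] at hy'
    linarith
  have h := measure_union_add_inter (μ := volume) S (measurableSet_cutCube a m (t - a))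
  rw [hunion, hinter, add_zero, volume_cutCube ha hm, volume_cutCube ha hm] at h
  rw [ENNReal.eq_sub_of_add_eq ENNReal.ofReal_ne_top h.symm, ← ENNReal.ofReal_sub _
    (div_nonneg (truncPowSum_self_nonneg ha hm _) (by positivity)), ← sub_div,
    truncPowSum_sub_shift]

lemma tsum_volume_slab_Ico (m : ℕ) :
    ∑' k : ℤ, volume (slab (Set.Ico 0 1) m k) = 1 := by
  have hslice : ∀ k : ℤ, slab (Set.Ico 0 1) m k =
      Set.univ.pi (fun _ => Set.Ico 0 1) ∩ {y | ⌈∑ i, y i⌉ = k} := fun k => by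
    ext y
    simp only [Set.mem_ofPred_eq, Set.mem_inter_iff, Set.mem_univ_pi, Set.mem_Ico, Int.ceil_eq_iff]
    constructor <;> rintro ⟨hy, h0, h1⟩ <;> exact ⟨hy, by linarith, by linarith⟩
  simp_rw [hslice]
  have hcover : ⋃ k : ℤ, {y : Fin m → ℝ | ⌈∑ i, y i⌉ = k} = Set.univ :=
    Set.iUnion_eq_univ_iff.mpr fun y => ⟨_, rfl⟩
  rw [← measure_iUnion, ← Set.inter_iUnion, hcover, Set.inter_univ, volume_pi_pi]
  · simp
  · intro k k' hkk
    exact Disjoint.mono Set.inter_subset_right Set.inter_subset_right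
      (Set.disjoint_left.mpr fun y hk hk' => hkk (hk.symm.trans hk'))
  · intro k
    exact (MeasurableSet.univ_pi fun _ => measurableSet_Ico).inter
      (measurableSet_eq_fun (by fun_prop) measurable_const)

lemma sum_truncPowSum_eq_Wexp {m : ℕ} (hm : m ≠ 0) {a : ℝ} (ha : 0 ≤ a) :
    ∑ k ∈ Icc (0 : ℤ) m, truncPowSum (m + 1) m a k / m ! = Wexp (m + 1) a := by
  have hinner : ∀ i : ℕ, ∑ k ∈ Icc (0 : ℤ) m, max ((k : ℝ) - i * a) 0 ^ m =
      ∑ k ∈ (Icc (1 : ℤ) m).filter (fun k : ℤ => (i : ℝ) * a ≤ k), ((k : ℝ) - i * a) ^ m := by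
    intro i
    have hmax : ∀ k : ℤ, max ((k : ℝ) - i * a) 0 ^ m =
        if (i : ℝ) * a ≤ k then ((k : ℝ) - i * a) ^ m else 0 := fun k => by
      split_ifs with h
      · rw [max_eq_left (sub_nonneg.mpr h)]
      · rw [max_eq_right (by linarith), zero_pow hm]
    simp_rw [hmax, ← sum_filter]
    refine (sum_subset (filter_subset_filter _ (Icc_subset_Icc_left zero_le_one)) ?_).symm
    intro k hk hk1
    simp only [mem_filter, mem_Icc, not_and, not_le] at hk hk1
    obtain rfl : k = 0 := by by_contra h; linarith [hk1 (by omega)]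
    have : (i : ℝ) * a = 0 := le_antisymm (by simpa using hk.2) (by positivity)
    simp [this, hm]
  simp only [Wexp, truncPowSum, ← sum_div, Nat.add_sub_cancel, Nat.cast_add, Nat.cast_one,
    add_sub_cancel_right]
  rw [sum_comm, div_eq_inv_mul, one_div]
  simp_rw [← mul_sum, hinner]
  congr 1
  refine sum_nbij' (fun i : ℕ => (i : ℤ)) Int.toNat (fun i hi => ?_) (fun i hi => ?_)
    (fun i _ => by simp) (fun i hi => Int.toNat_of_nonneg (mem_Icc.mp hi).1) (fun i _ => by simp)
  · simp only [mem_range, mem_Icc] at hi ⊢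
    omega
  · simp only [mem_range, mem_Icc] at hi ⊢
    omega

lemma tsum_volume_slab_Icc {m : ℕ} (hm : m ≠ 0) {a : ℝ} (ha0 : 0 ≤ a) (ha1 : a < 1) :
    ∑' k : ℤ, volume (slab (Set.Icc 0 a) m k) = ENNReal.ofReal (Wexp (m + 1) a) := by
  rw [tsum_eq_sum (s := Icc (0 : ℤ) m) fun k hk => ?_]
  · simp_rw [volume_slab_Icc ha0 hm]
    rw [← ENNReal.ofReal_sum_of_nonneg fun k _ => ?_, sum_truncPowSum_eq_Wexp hm ha0]
    rw [← truncPowSum_sub_shift, sub_div, sub_nonneg]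
    exact div_le_div_of_nonneg_right
      (monotone_truncPowSum_self ha0 hm (by linarith)) (by positivity)
  · refine measure_mono_null (fun y ⟨hy, hk0, hk1⟩ => hk ?_) measure_empty
    have hsum0 : 0 ≤ ∑ i, y i := sum_nonneg fun i _ => (hy i).1
    have hsum1 : ∑ i, y i ≤ m * a := by
      simpa using sum_le_sum fun i (_ : i ∈ univ) => (hy i).2
    have hk_lt : (k : ℝ) < m + 1 := by nlinarith
    have : k < m + 1 := by exact_mod_cast hk_lt
    have : 0 ≤ k := by exact_mod_cast (by linarith : (0 : ℝ) ≤ k)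
    exact mem_Icc.mpr ⟨by omega, by omega⟩

lemma exists_hausdorffMeasure_image_affine_eq {E : Type*} [NormedAddCommGroup E]
    [NormedSpace ℝ E] [MeasurableSpace E] [BorelSpace E] {m : ℕ}
    {L : (Fin m → ℝ) →ₗ[ℝ] E} (hL : Function.Injective L) :
    ∃ c : ℝ≥0, ∀ (v : E) (s : Set (Fin m → ℝ)),
      μH[m] ((fun y => v + L y) '' s) = c * volume s := by
  have hemb : MeasurableEmbedding L :=
    (LinearMap.isClosedEmbedding_of_injective (LinearMap.ker_eq_bot.mpr hL)).measurableEmbedding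
  have htrans : ∀ (v : E) (t : Set E), μH[m] ((v + ·) '' t) = μH[m] t := fun v t =>
    (IsometryEquiv.addLeft v).isometry.hausdorffMeasure_image
      (Or.inr (IsometryEquiv.addLeft v).surjective) t
  set ν := Measure.comap L μH[m]
  have hν : ∀ s, ν s = μH[m] (L '' s) := fun s => hemb.comap_apply _ s
  have : ν.IsAddLeftInvariant := ⟨fun g => Measure.ext fun s hs => by
    rw [Measure.map_apply (measurable_const_add g) hs, hν, hν, ← htrans (-L g) (L '' s)]
    congr 1
    ext x
    constructor
    · rintro ⟨y, hy, rfl⟩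
      exact ⟨L (g + y), ⟨g + y, hy, rfl⟩, by simp⟩
    · rintro ⟨-, ⟨y, hy, rfl⟩, rfl⟩
      exact ⟨-g + y, by simpa using hy, by simp⟩⟩
  have : IsFiniteMeasureOnCompacts ν := ⟨fun K hK => by
    rw [hν]
    refine ((LinearMap.toContinuousLinearMap L).lipschitz.hausdorffMeasure_image_le
      (Nat.cast_nonneg m) K).trans_lt (ENNReal.mul_lt_top (by simp) ?_)
    have hvol : (μH[m] : Measure (Fin m → ℝ)) = volume := by
      simpa using hausdorffMeasure_pi_real (ι := Fin m)
    exact hvol ▸ hK.measure_lt_top⟩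
  refine ⟨ν.addHaarScalarFactor volume, fun v s => ?_⟩
  rw [← Set.image_image (v + ·) L, htrans, ← hν]
  nth_rw 1 [Measure.isAddLeftInvariant_eq_smul ν volume]
  rfl

noncomputable def levelChart (m : ℕ) (k : ℝ) (y : Fin m → ℝ) : EuclideanSpace ℝ (Fin (m + 1)) :=
  WithLp.toLp 2 (Fin.snoc y (k - ∑ i, y i))

@[simp]
lemma levelChart_castSucc (m : ℕ) (k : ℝ) (y : Fin m → ℝ) (j : Fin m) :
    levelChart m k y j.castSucc = y j := by
  simp [levelChart]

@[simp]
lemma levelChart_last (m : ℕ) (k : ℝ) (y : Fin m → ℝ) :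
    levelChart m k y (Fin.last m) = k - ∑ i, y i := by
  simp [levelChart]

lemma sum_levelChart (m : ℕ) (k : ℝ) (y : Fin m → ℝ) : ∑ i, levelChart m k y i = k := by
  simp [Fin.sum_univ_castSucc]

noncomputable def sumZeroChart (m : ℕ) : (Fin m → ℝ) →ₗ[ℝ] EuclideanSpace ℝ (Fin (m + 1)) where
  toFun := levelChart m 0
  map_add' y z := by
    ext i
    induction i using Fin.lastCases <;> simp [sum_add_distrib]
    ring
  map_smul' c y := by
    ext i
    induction i using Fin.lastCases <;> simp [mul_sum]

lemma levelChart_eq_add (m : ℕ) (k : ℝ) (y : Fin m → ℝ) :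
    levelChart m k y = levelChart m k 0 + sumZeroChart m y := by
  ext i
  induction i using Fin.lastCases <;> simp [sumZeroChart, sub_eq_add_neg]

lemma sumZeroChart_injective (m : ℕ) : Function.Injective (sumZeroChart m) := fun y z h => by
  ext j
  simpa [sumZeroChart] using congrArg (fun x : EuclideanSpace ℝ (Fin (m + 1)) => x j.castSucc) h

lemma measurableEmbedding_levelChart (m : ℕ) (k : ℝ) : MeasurableEmbedding (levelChart m k) := by
  have hL := LinearMap.isClosedEmbedding_of_injective
    (LinearMap.ker_eq_bot.mpr (sumZeroChart_injective m))
  rw [funext (levelChart_eq_add m k)]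
  exact ((Homeomorph.addLeft (levelChart m k 0)).isClosedEmbedding.comp hL).measurableEmbedding

lemma exists_hausdorffMeasure_levelChart_image (m : ℕ) :
    ∃ c : ℝ≥0, ∀ (k : ℝ) (s : Set (Fin m → ℝ)), μH[m] (levelChart m k '' s) = c * volume s := by
  obtain ⟨c, hc⟩ := exists_hausdorffMeasure_image_affine_eq (sumZeroChart_injective m)
  exact ⟨c, fun k s => by rw [funext (levelChart_eq_add m k), hc]⟩

lemma levelChart_image (m : ℕ) (B : Set ℝ) (k : ℝ) :
    levelChart m k '' slab B m k = {x | (∀ i, x i ∈ B) ∧ ∑ i, x i = k} := by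
  ext x
  constructor
  · rintro ⟨y, ⟨hy, hlast⟩, rfl⟩
    refine ⟨fun i => ?_, sum_levelChart m k y⟩
    induction i using Fin.lastCases <;> simp [hy, hlast]
  · rintro ⟨hx, hsum⟩
    refine ⟨fun j => x j.castSucc, ⟨fun j => hx _, ?_⟩, ?_⟩
    · simpa [← hsum, Fin.sum_univ_castSucc] using hx (Fin.last m)
    · ext i
      induction i using Fin.lastCases <;> simp [← hsum, Fin.sum_univ_castSucc]

/-- For `B = [0,1)` this is `Dhat d` without the sorting condition. -/
def intSumSet (d : ℕ) (B : Set ℝ) : Set (EuclideanSpace ℝ (Fin d)) :=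
  {x | (∀ i, x i ∈ B) ∧ ∃ k : ℤ, ∑ i, x i = k}

lemma intSumSet_eq_iUnion (m : ℕ) (B : Set ℝ) :
    intSumSet (m + 1) B = ⋃ k : ℤ, levelChart m k '' slab B m k := by
  ext x
  simp only [levelChart_image, intSumSet, Set.mem_iUnion, Set.mem_ofPred_eq, exists_and_left]

lemma hausdorffMeasure_intSumSet {m : ℕ} {c : ℝ≥0}
    (hc : ∀ (k : ℝ) (s : Set (Fin m → ℝ)), μH[m] (levelChart m k '' s) = c * volume s)
    {B : Set ℝ} (hB : MeasurableSet B) :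
    μH[m] (intSumSet (m + 1) B) = c * ∑' k : ℤ, volume (slab B m k) := by
  rw [intSumSet_eq_iUnion, measure_iUnion]
  · simp only [hc, ENNReal.tsum_mul_left]
  · intro k k' hkk
    simp only [Function.onFun, levelChart_image, Set.disjoint_left]
    rintro x ⟨-, hx⟩ ⟨-, hx'⟩
    exact hkk (by exact_mod_cast hx.symm.trans hx')
  · exact fun k => (measurableEmbedding_levelChart m k).measurableSet_image'
      (measurableSet_slab hB k)

lemma sumZeroChart_single_self (m : ℕ) (p : Fin m) :
    sumZeroChart m (Pi.single p 1) p.castSucc = 1 := by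
  simp [sumZeroChart]

lemma sumZeroChart_single_nonpos (m : ℕ) (p : Fin m) {q : Fin (m + 1)} (hq : q ≠ p.castSucc) :
    sumZeroChart m (Pi.single p 1) q ≤ 0 := by
  induction q using Fin.lastCases with
  | last => simp [sumZeroChart]
  | cast q =>
    have hqp : q ≠ p := fun h => hq (h ▸ rfl)
    simp [sumZeroChart, hqp]

lemma hausdorffMeasure_intSumSet_inter_coord_eq (m : ℕ) (B : Set ℝ) {i j : Fin (m + 1)}
    (hij : i ≠ j) : μH[m] (intSumSet (m + 1) B ∩ {x | x i = x j}) = 0 := by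
  obtain ⟨c, hc⟩ := exists_hausdorffMeasure_levelChart_image m
  -- in the chart of `∑ x = k`, the condition `x i = x j` is a level set of the nonzero form `ℓ`
  let ℓ : (Fin m → ℝ) →ₗ[ℝ] ℝ :=
    ((EuclideanSpace.proj i - EuclideanSpace.proj j : EuclideanSpace ℝ (Fin (m + 1)) →L[ℝ] ℝ) :
      EuclideanSpace ℝ (Fin (m + 1)) →ₗ[ℝ] ℝ) ∘ₗ sumZeroChart m
  have hℓ_apply : ∀ y, ℓ y = sumZeroChart m y i - sumZeroChart m y j := fun y => rfl
  have hℓ : ℓ ≠ 0 := by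
    obtain ⟨p, hp⟩ : ∃ p : Fin m, p.castSucc = i ∨ p.castSucc = j := by
      induction i using Fin.lastCases with
      | cast p => exact ⟨p, Or.inl rfl⟩
      | last =>
        induction j using Fin.lastCases with
        | cast p => exact ⟨p, Or.inr rfl⟩
        | last => exact absurd rfl hij
    intro h
    have hp0 := LinearMap.congr_fun h (Pi.single p 1)
    rw [hℓ_apply, LinearMap.zero_apply] at hp0
    rcases hp with rfl | rfl
    · linarith [sumZeroChart_single_self m p, sumZeroChart_single_nonpos m p hij.symm]
    · linarith [sumZeroChart_single_self m p, sumZeroChart_single_nonpos m p hij]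
  have hsub : intSumSet (m + 1) B ∩ {x | x i = x j} ⊆
      ⋃ k : ℤ, levelChart m k '' {y | ℓ y = levelChart m k 0 j - levelChart m k 0 i} := by
    rw [intSumSet_eq_iUnion, Set.iUnion_inter]
    refine Set.iUnion_mono fun k => ?_
    rintro - ⟨⟨y, -, rfl⟩, hy⟩
    refine ⟨y, ?_, rfl⟩
    simp only [Set.mem_ofPred_eq, levelChart_eq_add m k y, PiLp.add_apply] at hy ⊢
    rw [hℓ_apply]
    linarith
  refine measure_mono_null hsub (measure_iUnion_null fun k => ?_)
  rw [hc, addHaar_linearMap_fiber_eq_zero volume hℓ, mul_zero]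

noncomputable def permCoords {d : ℕ} (σ : Equiv.Perm (Fin d)) :
    EuclideanSpace ℝ (Fin d) ≃ₗᵢ[ℝ] EuclideanSpace ℝ (Fin d) :=
  LinearIsometryEquiv.piLpCongrLeft 2 ℝ ℝ σ

@[simp]
lemma permCoords_apply {d : ℕ} (σ : Equiv.Perm (Fin d)) (x : EuclideanSpace ℝ (Fin d))
    (i : Fin d) : permCoords σ x i = x (σ.symm i) := by
  simp [permCoords, LinearIsometryEquiv.piLpCongrLeft_apply, Equiv.piCongrLeft'_apply]

lemma measurableSet_setOf_monotone (d : ℕ) :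
    MeasurableSet {x : EuclideanSpace ℝ (Fin d) | Monotone x} := by
  simp only [Monotone, Set.ofPred_forall]
  measurability

lemma measurableSet_setOf_injective (d : ℕ) :
    MeasurableSet {x : EuclideanSpace ℝ (Fin d) | Function.Injective x} := by
  simp only [Function.Injective, Set.ofPred_forall]
  measurability

lemma subset_iUnion_permCoords_image_sorted {d : ℕ} {U : Set (EuclideanSpace ℝ (Fin d))}
    (hU : ∀ σ, ∀ x ∈ U, permCoords σ x ∈ U) :
    U ⊆ ⋃ σ, permCoords σ '' (U ∩ {x | Monotone x}) := fun x hx => by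
  let τ := Tuple.sort x.ofLp
  have hsorted : (permCoords τ.symm x).ofLp = x.ofLp ∘ τ := by ext i; simp
  refine Set.mem_iUnion.mpr ⟨τ, permCoords τ.symm x, ⟨hU _ x hx, ?_⟩, by ext i; simp⟩
  rw [Set.mem_ofPred_eq, hsorted]
  exact Tuple.monotone_sort x.ofLp

lemma pairwise_disjoint_permCoords_image_sorted_injective (d : ℕ) :
    Pairwise (Function.onFun Disjoint fun σ : Equiv.Perm (Fin d) =>
      permCoords σ '' {x | Monotone x ∧ Function.Injective x}) := by
  intro σ τ hστ
  rw [Function.onFun, Set.disjoint_left]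
  rintro - ⟨y, ⟨hy, hy_inj⟩, rfl⟩ ⟨z, ⟨hz, -⟩, hzy⟩
  set w := (permCoords σ y).ofLp
  have hwσ : w ∘ σ = y.ofLp := by ext i; simp [w]
  have hwτ : w ∘ τ = z.ofLp := by ext i; simp [w, ← hzy]
  have hw_inj : Function.Injective w := by
    have hw : w = y.ofLp ∘ σ.symm := by ext i; simp [w]
    exact hw ▸ hy_inj.comp σ.symm.injective
  have hmono := Tuple.unique_monotone (hwσ ▸ hy) (hwτ ▸ hz)
  exact hστ (Equiv.ext fun i => hw_inj (congrFun hmono i))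

lemma hausdorffMeasure_eq_factorial_mul_sorted {d : ℕ} {s : ℝ}
    {U : Set (EuclideanSpace ℝ (Fin d))} (hU : MeasurableSet U)
    (hperm : ∀ σ, ∀ x ∈ U, permCoords σ x ∈ U)
    (hnull : μH[s] (U ∩ {x | ¬ Function.Injective x}) = 0) :
    μH[s] U = d ! * μH[s] (U ∩ {x | Monotone x}) := by
  set T := U ∩ {x | Monotone x}
  set T' := U ∩ {x | Monotone x ∧ Function.Injective x}
  have hsum : ∀ A, ∑ σ : Equiv.Perm (Fin d), μH[s] (permCoords σ '' A) = d ! * μH[s] A := by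
    intro A
    simp [(permCoords _).isometry.hausdorffMeasure_image (Or.inr (permCoords _).surjective),
      Fintype.card_perm]
  have hdiff : T \ T' ⊆ U ∩ {x | ¬ Function.Injective x} :=
    fun x hx => ⟨hx.1.1, fun h => hx.2 ⟨hx.1.1, hx.1.2, h⟩⟩
  have hT' : μH[s] T' = μH[s] T :=
    measure_eq_measure_of_null_sdiff (fun x hx => ⟨hx.1, hx.2.1⟩) (measure_mono_null hdiff hnull)
  have hmeas : ∀ σ, MeasurableSet (permCoords σ '' T') := fun σ =>
    (permCoords σ).toHomeomorph.measurableEmbedding.measurableSet_image'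
      (hU.inter ((measurableSet_setOf_monotone d).inter (measurableSet_setOf_injective d)))
  apply le_antisymm
  · calc μH[s] U ≤ μH[s] (⋃ σ, permCoords σ '' T) :=
          measure_mono (subset_iUnion_permCoords_image_sorted hperm)
      _ ≤ ∑ σ, μH[s] (permCoords σ '' T) := measure_iUnion_fintype_le _ _
      _ = d ! * μH[s] T := hsum T
  · calc d ! * μH[s] T = ∑ σ, μH[s] (permCoords σ '' T') := by rw [hsum, hT']
      _ = μH[s] (⋃ σ, permCoords σ '' T') := by
          rw [measure_iUnion ?_ hmeas, tsum_fintype]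
          exact (pairwise_disjoint_permCoords_image_sorted_injective d).mono fun σ τ =>
            Disjoint.mono (Set.image_mono Set.inter_subset_right)
              (Set.image_mono Set.inter_subset_right)
      _ ≤ μH[s] U := measure_mono <| Set.iUnion_subset fun σ => by
          rintro - ⟨x, hx, rfl⟩
          exact hperm σ x hx.1

lemma measurableSet_intSumSet (d : ℕ) {B : Set ℝ} (hB : MeasurableSet B) :
    MeasurableSet (intSumSet d B) := by
  unfold intSumSet
  measurability

lemma permCoords_mem_intSumSet {d : ℕ} {B : Set ℝ} (σ : Equiv.Perm (Fin d))
    {x : EuclideanSpace ℝ (Fin d)} (hx : x ∈ intSumSet d B) : permCoords σ x ∈ intSumSet d B := by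
  obtain ⟨hB, k, hk⟩ := hx
  refine ⟨fun i => by simpa using hB _, k, ?_⟩
  simpa [← hk] using Equiv.sum_comp σ.symm x.ofLp

lemma hausdorffMeasure_intSumSet_inter_not_injective (m : ℕ) (B : Set ℝ) :
    μH[m] (intSumSet (m + 1) B ∩ {x | ¬ Function.Injective x}) = 0 := by
  have hsub : intSumSet (m + 1) B ∩ {x | ¬ Function.Injective x} ⊆
      ⋃ (i) (j) (_ : i ≠ j), intSumSet (m + 1) B ∩ {x | x i = x j} := fun x ⟨hx, hninj⟩ => by
    obtain ⟨i, j, hxij, hij⟩ := Function.not_injective_iff.mp hninj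
    exact Set.mem_iUnion₂.mpr ⟨i, j, Set.mem_iUnion.mpr ⟨hij, hx, hxij⟩⟩
  exact measure_mono_null hsub (measure_iUnion_null fun i => measure_iUnion_null fun j =>
    measure_iUnion_null fun hij => hausdorffMeasure_intSumSet_inter_coord_eq m B hij)

lemma hausdorffMeasure_intSumSet_eq_factorial_mul (m : ℕ) {B : Set ℝ} (hB : MeasurableSet B) :
    μH[m] (intSumSet (m + 1) B) = (m + 1)! * μH[m] (intSumSet (m + 1) B ∩ {x | Monotone x}) :=
  hausdorffMeasure_eq_factorial_mul_sorted (measurableSet_intSumSet _ hB)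
    (fun σ _ => permCoords_mem_intSumSet σ) (hausdorffMeasure_intSumSet_inter_not_injective m B)

lemma intSumSet_Ico_inter_monotone (d : ℕ) :
    intSumSet d (Set.Ico 0 1) ∩ {x | Monotone x} = Dhat d := by
  ext x
  simp only [intSumSet, Dhat, Set.mem_inter_iff, Set.mem_ofPred_eq, Set.mem_Ico, Monotone]
  tauto

lemma intSumSet_Icc_inter_monotone (m : ℕ) {a : ℝ} (ha1 : a < 1) :
    intSumSet (m + 1) (Set.Icc 0 a) ∩ {x | Monotone x} =
      {x | (∀ i, 0 ≤ x i ∧ x i < 1) ∧ x (Fin.last m) ≤ a} ∩ Dhat (m + 1) := by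
  ext x
  simp only [intSumSet, Dhat, Set.mem_inter_iff, Set.mem_ofPred_eq, Set.mem_Icc, Monotone]
  constructor
  · rintro ⟨⟨hx, hsum⟩, hmono⟩
    have hx1 : ∀ i, 0 ≤ x i ∧ x i < 1 := fun i => ⟨(hx i).1, (hx i).2.trans_lt ha1⟩
    exact ⟨⟨hx1, (hx _).2⟩, hx1, hmono, hsum⟩
  · rintro ⟨⟨-, hlast⟩, hx, hmono, hsum⟩
    exact ⟨⟨fun i => ⟨(hx i).1, (hmono _ _ (Fin.le_last i)).trans hlast⟩, hsum⟩, hmono⟩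

/-- for `n ≥ 2` and `0 ≤ a < 1`, with `E_a = {x ∈ [0,1)^n : x_n ≤ a}`, the
`(n−1)`-dimensional Hausdorff measure of `E_a ∩ D̂_n` equals `W_a` times that of `D̂_n`. -/
theorem statement2 (n : ℕ) (hn : 2 ≤ n) (a : ℝ) (ha0 : 0 ≤ a) (ha1 : a < 1) :
    μH[(n : ℝ) - 1]
        ({x : EuclideanSpace ℝ (Fin n) | (∀ i, 0 ≤ x i ∧ x i < 1) ∧ x ⟨n - 1, by omega⟩ ≤ a}
          ∩ Dhat n) =
      ENNReal.ofReal (Wexp n a) * μH[(n : ℝ) - 1] (Dhat n) := by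
  obtain ⟨m, rfl⟩ : ∃ m, n = m + 1 := ⟨n - 1, by omega⟩
  have hm : m ≠ 0 := by omega
  obtain ⟨c, hc⟩ := exists_hausdorffMeasure_levelChart_image m
  have hD := hausdorffMeasure_intSumSet_eq_factorial_mul m (measurableSet_Ico (a := 0) (b := 1))
  have hE := hausdorffMeasure_intSumSet_eq_factorial_mul m (measurableSet_Icc (a := 0) (b := a))
  rw [hausdorffMeasure_intSumSet hc measurableSet_Ico, tsum_volume_slab_Ico,
    intSumSet_Ico_inter_monotone, mul_one] at hD
  rw [hausdorffMeasure_intSumSet hc measurableSet_Icc, tsum_volume_slab_Icc hm ha0 ha1,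
    intSumSet_Icc_inter_monotone m ha1, hD, mul_assoc, mul_comm (μH[m] _)] at hE
  have hfac : ((m + 1)! : ℝ≥0∞) ≠ 0 := by positivity
  simpa [Fin.last] using (ENNReal.mul_right_inj hfac (ENNReal.natCast_ne_top _)).mp hE.symm
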